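/- The homeomorphic embedding relation ⊴ on terms over a finite signature is a well-quasi-order: it is reflexive, transitive, and every infinite sequence of terms t_1, t_2, ... contains indices i < j with t_i ⊴ t_j. -/

import Mathlib

/-- First-order terms over a signature `S`: finite rooted trees whose nodes are
labeled by symbols of `S`. -/
inductive Term (S : Type*) where
  | node (s : S) (ts : List (Term S))

/-- A term is arity-respecting (well-formed) if the number of children of each
node equals the arity of its label. -/
inductive WF {S : Type*} (ar : S → ℕ) : Term S → Prop
  | node {s : S} {ts : List (Term S)} :
      ts.length = ar s → (∀ t ∈ ts, WF ar t) → WF ar (Term.node s ts)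

/-- The homeomorphic embedding on terms: `e ⊴ s(f₁,…,fₙ)` whenever `e ⊴ fᵢ` for
some `i` (diving), and `s(e₁,…,eₙ) ⊴ s(f₁,…,fₙ)` whenever `eᵢ ⊴ fᵢ` for all `i`
(coupling, which in particular relates equal constants). -/
inductive Emb {S : Type*} : Term S → Term S → Prop
  | dive {e : Term S} {s : S} {fs : List (Term S)} {f : Term S} :
      f ∈ fs → Emb e f → Emb e (Term.node s fs)
  | couple {s : S} {es fs : List (Term S)} (h : es.length = fs.length) :
      (∀ i : Fin es.length, Emb (es.get i) (fs.get (Fin.cast h i))) →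
      Emb (Term.node s es) (Term.node s fs)

/-!
Nash-Williams' minimal bad sequence argument. Take a bad sequence of well-formed terms that is
minimal in size at every position. The children of its terms form a well-quasi-ordered set:
a bad sequence of children, grafted onto a prefix of the minimal sequence, would be a smaller
bad sequence, since a term embedding into a child embeds into its parent. By Higman's lemma the
children lists are then well-quasi-ordered under `SublistForall₂`, and since the signature is
finite two terms `t m`, `t n` with `m < n` carry the same label and comparable children lists.
The arity constraint forces those lists to have equal length, so `t m ⊴ t n` by coupling.
-/

theorem List.SublistForall₂.forall₂_of_length_eq {α β : Type*} {R : α → β → Prop}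
    {l₁ : List α} {l₂ : List β} (h : List.SublistForall₂ R l₁ l₂)
    (hl : l₁.length = l₂.length) : List.Forall₂ R l₁ l₂ := by
  obtain ⟨l, hfa, hsub⟩ := List.sublistForall₂_iff.mp h
  rwa [hsub.eq_of_length (hfa.length_eq.symm.trans hl)] at hfa

namespace Set.PartiallyWellOrderedOn

theorem iUnion_of_isMinBadSeq {α : Type*} {r : α → α → Prop} {rk : α → ℕ} {s : Set α}
    (sub : α → Set α) (hsub : ∀ x ∈ s, sub x ⊆ s)
    (hsub_rk : ∀ x, ∀ y ∈ sub x, rk y < rk x)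
    (hsub_r : ∀ x, ∀ y ∈ sub x, ∀ z, r z y → r z x)
    {f : ℕ → α} (hf : IsBadSeq r s f) (hmin : ∀ n, IsMinBadSeq r rk s n f) :
    (⋃ n, sub (f n)).PartiallyWellOrderedOn r := by
  rw [iff_forall_not_isBadSeq]
  rintro g ⟨hg_mem, hg_bad⟩
  simp only [Set.mem_iUnion] at hg_mem
  choose φ hφ using hg_mem
  set k₀ := Function.argmin φ
  set N := φ k₀
  have hN : ∀ k, N ≤ φ k := fun k => Function.argmin_le φ k
  let f' : ℕ → α := fun m => if m < N then f m else g (k₀ + (m - N))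
  refine hmin N f' (fun m hm => (if_pos hm).symm) ?_ ⟨fun m => ?_, fun m n hmn hrmn => ?_⟩
  · simpa [f'] using hsub_rk _ _ (hφ k₀)
  · by_cases hm : m < N
    · simpa [f', hm] using hf.1 m
    · simpa [f', hm] using hsub _ (hf.1 _) (hφ _)
  · by_cases hn : n < N
    · exact hf.2 m n hmn (by simpa [f', hn, hmn.trans hn] using hrmn)
    by_cases hm : m < N
    · -- `g` only uses children of terms of `f` from position `N` on
      refine hf.2 m _ (hm.trans_le (hN (k₀ + (n - N)))) (hsub_r _ _ (hφ _) _ ?_)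
      simpa [f', hm, hn] using hrmn
    · exact hg_bad (k₀ + (m - N)) (k₀ + (n - N)) (by omega) (by simpa [f', hm, hn] using hrmn)

end Set.PartiallyWellOrderedOn

namespace Term

variable {S : Type*}

def label : Term S → S
  | .node s _ => s

def children : Term S → List (Term S)
  | .node _ ts => ts

@[simp]
theorem node_label_children (t : Term S) : node t.label t.children = t := by
  cases t; rfl

theorem sizeOf_lt_of_mem_children {t u : Term S} (h : u ∈ t.children) : sizeOf u < sizeOf t := by
  obtain ⟨s, ts⟩ := t
  have := List.sizeOf_lt_of_mem (show u ∈ ts from h)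
  simp only [node.sizeOf_spec]
  omega

end Term

namespace WF

variable {S : Type*} {ar : S → ℕ} {t : Term S}

theorem of_mem_children (h : WF ar t) {u : Term S} (hu : u ∈ t.children) : WF ar u := by
  cases h with
  | node _ hts => exact hts u hu

theorem length_children (h : WF ar t) : t.children.length = ar t.label := by
  cases h with
  | node hlen _ => exact hlen

end WF

namespace Emb

variable {S : Type*}

theorem of_mem_children {e t u : Term S} (hu : u ∈ t.children) (he : Emb e u) : Emb e t := by
  cases t
  exact dive hu he

theorem node_of_forall₂ {s : S} {es fs : List (Term S)} (h : List.Forall₂ Emb es fs) :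
    Emb (.node s es) (.node s fs) := by
  obtain ⟨hl, hget⟩ := List.forall₂_iff_get.mp h
  exact couple hl fun i => hget i i.isLt (hl ▸ i.isLt)

theorem refl : ∀ t : Term S, Emb t t
  | .node s ts => node_of_forall₂ (List.forall₂_same.mpr fun t ht =>
      have := Term.sizeOf_lt_of_mem_children (t := .node s ts) ht
      refl t)
termination_by t => sizeOf t

theorem trans {a b c : Term S} (hab : Emb a b) (hbc : Emb b c) : Emb a c := by
  match c, hbc with
  | .node _ fs, .dive hf hbf => exact dive hf (trans hab hbf)
  | .node _ fs, .couple hl hget =>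
    cases hab with
    | dive he hae =>
      obtain ⟨i, rfl⟩ := List.get_of_mem he
      exact dive (fs.get_mem _) (trans hae (hget i))
    | couple hl' hget' =>
      exact couple (hl'.trans hl) fun i => by simpa using trans (hget' i) (hget (Fin.cast hl' i))
termination_by sizeOf c
decreasing_by
  · exact Term.sizeOf_lt_of_mem_children hf
  all_goals exact Term.sizeOf_lt_of_mem_children (List.get_mem _ _)

instance : IsPreorder (Term S) Emb where
  refl := refl
  trans _ _ _ := trans

theorem of_sublistForall₂_children {ar : S → ℕ} {t u : Term S} (ht : WF ar t) (hu : WF ar u)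
    (hlabel : t.label = u.label) (h : List.SublistForall₂ Emb t.children u.children) :
    Emb t u := by
  have hlen : t.children.length = u.children.length := by
    rw [ht.length_children, hu.length_children, hlabel]
  rw [← t.node_label_children, ← u.node_label_children, hlabel]
  exact node_of_forall₂ (h.forall₂_of_length_eq hlen)

open Set.PartiallyWellOrderedOn in
theorem partiallyWellOrderedOn_setOf_wf [Finite S] (ar : S → ℕ) :
    {t : Term S | WF ar t}.PartiallyWellOrderedOn Emb := by
  rw [iff_not_exists_isMinBadSeq (sizeOf : Term S → ℕ)]
  rintro ⟨f, hf, hmin⟩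
  have hchildren : (⋃ n, {u | u ∈ (f n).children}).PartiallyWellOrderedOn Emb :=
    iUnion_of_isMinBadSeq (r := Emb) (fun t : Term S => {u | u ∈ t.children})
      (fun _ ht _ hu => WF.of_mem_children ht hu)
      (fun _ _ hu => Term.sizeOf_lt_of_mem_children hu) (fun _ _ hu _ => of_mem_children hu) hf hmin
  have hlabels : (Set.univ : Set S).PartiallyWellOrderedOn (· = ·) :=
    Set.finite_univ.partiallyWellOrderedOn
  obtain ⟨m, n, hmn, hlabel, hsub⟩ :=
    (hlabels.prod (hchildren.partiallyWellOrderedOn_sublistForall₂ Emb)).exists_lt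
      (f := fun n => ((f n).label, (f n).children))
      fun n => ⟨trivial, fun _ hu => Set.mem_iUnion.mpr ⟨n, hu⟩⟩
  exact hf.2 m n hmn (of_sublistForall₂_children (hf.1 m) (hf.1 n) hlabel hsub)

end Emb

/-- the homeomorphic embedding on terms over a finite signature is
a well-quasi-order: reflexive, transitive, and every infinite sequence of terms
contains `i < j` with `t i ⊴ t j`. -/
theorem emb_is_wqo {S : Type*} [Finite S] (ar : S → ℕ) :
    Reflexive (@Emb S) ∧ Transitive (@Emb S) ∧
      ∀ t : ℕ → Term S, (∀ n, WF ar (t n)) → ∃ i j, i < j ∧ Emb (t i) (t j) :=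
  ⟨Emb.refl, fun _ _ _ => Emb.trans,
    fun _ ht => (Emb.partiallyWellOrderedOn_setOf_wf ar).exists_lt ht⟩
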